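/- Let X be a random variable with E[X²(log|X|)^a (log log|X|)^{b-1}] < ∞ for some a > -1, b > -1, and let φ(n) = √(2n log log n). Then Σ_{n=1}^∞ (log n)^a (log log n)^b P(|X| ≥ φ(n)) ≤ K · E[X²(log|X|)^a (log log|X|)^{b-1}] for some constant K = K(a,b), and in particular the series converges. -/

import Mathlib

open Real Filter Set MeasureTheory ProbabilityTheory

/-- `lg x = ln (max x e)`. -/
noncomputable def lg (x : ℝ) : ℝ := Real.log (max x (Real.exp 1))

/-- `llg x = lg (lg x)`. -/
noncomputable def llg (x : ℝ) : ℝ := lg (lg x)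

/-- `φ(n) = √(2 n log log n)`. -/
noncomputable def phi (n : ℕ) : ℝ := Real.sqrt (2 * n * llg n)

lemma one_le_lg (x : ℝ) : 1 ≤ lg x := by
  have h := Real.log_le_log (Real.exp_pos 1) (le_max_right x (Real.exp 1))
  simpa [lg] using h

lemma lg_pos (x : ℝ) : 0 < lg x := lt_of_lt_of_le one_pos (one_le_lg x)

lemma lg_mono : Monotone lg := fun x y h =>
  Real.log_le_log (lt_of_lt_of_le (Real.exp_pos 1) (le_max_right x _))
    (max_le_max h le_rfl)

lemma one_le_llg (x : ℝ) : 1 ≤ llg x := one_le_lg _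

lemma llg_pos (x : ℝ) : 0 < llg x := lg_pos _

lemma llg_mono : Monotone llg := fun x y h => lg_mono (lg_mono h)

lemma lg_le_self {x : ℝ} (hx : 1 ≤ x) : lg x ≤ x := by
  rcases le_total x (Real.exp 1) with h | h
  · rw [lg, max_eq_right h, Real.log_exp]; exact hx
  · rw [lg, max_eq_left h]
    have := Real.log_le_sub_one_of_pos (lt_of_lt_of_le one_pos hx)
    linarith

lemma llg_le_lg (x : ℝ) : llg x ≤ lg x := lg_le_self (one_le_lg x)

lemma lg_sq_le {x : ℝ} (hx : 0 ≤ x) : lg (x ^ 2) ≤ 2 * lg x := by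
  rcases le_total (x ^ 2) (Real.exp 1) with h | h
  · rw [lg, max_eq_right h, Real.log_exp]
    linarith [one_le_lg x]
  · rw [lg, max_eq_left h]
    have hx0 : 0 < x := by nlinarith [Real.exp_pos 1]
    have h1 : Real.log x ≤ lg x := Real.log_le_log hx0 (le_max_left _ _)
    rw [Real.log_pow]
    push_cast
    linarith

lemma lg_two_mul_le {t : ℝ} (ht : 1 ≤ t) : lg (2 * t) ≤ 2 * lg t := by
  have hmax : max (2 * t) (Real.exp 1) ≤ 2 * max t (Real.exp 1) := by
    apply max_le
    · nlinarith [le_max_left t (Real.exp 1)]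
    · nlinarith [Real.exp_pos 1, le_max_right t (Real.exp 1)]
  have hpos : 0 < max (2 * t) (Real.exp 1) :=
    lt_of_lt_of_le (Real.exp_pos 1) (le_max_right _ _)
  have h2 : lg (2 * t) ≤ Real.log (2 * max t (Real.exp 1)) :=
    Real.log_le_log hpos hmax
  rw [Real.log_mul two_ne_zero
    (ne_of_gt (lt_of_lt_of_le (Real.exp_pos 1) (le_max_right _ _)))] at h2
  have hlog2 : Real.log 2 ≤ 1 := by
    have := Real.log_le_sub_one_of_pos (by norm_num : (0:ℝ) < 2)
    linarith
  have h3 := one_le_lg t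
  unfold lg at *
  linarith

lemma llg_sq_le {x : ℝ} (hx : 0 ≤ x) : llg (x ^ 2) ≤ 2 * llg x := by
  calc llg (x ^ 2) = lg (lg (x ^ 2)) := rfl
    _ ≤ lg (2 * lg x) := lg_mono (lg_sq_le hx)
    _ ≤ 2 * lg (lg x) := lg_two_mul_le (one_le_lg x)
    _ = 2 * llg x := rfl

lemma lg_cube_le {x : ℝ} (hx : 1 ≤ x) : lg x ^ (3 : ℕ) ≤ 216 * Real.exp 1 * x := by
  set M := max x (Real.exp 1) with hM
  have hM1 : 1 ≤ M := le_trans hx (le_max_left _ _)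
  have hM0 : 0 ≤ M := by linarith
  have he1 : (1:ℝ) ≤ Real.exp 1 := by linarith [Real.add_one_le_exp 1]
  have h1 : lg x ≤ 6 * M ^ ((6:ℝ)⁻¹) := by
    have := Real.log_le_rpow_div hM0 (by norm_num : (0:ℝ) < (6:ℝ)⁻¹)
    have h' : M ^ ((6:ℝ)⁻¹) / (6:ℝ)⁻¹ = 6 * M ^ ((6:ℝ)⁻¹) := by ring
    rw [h'] at this
    rw [lg]
    linarith
  have hlg0 : 0 ≤ lg x := by linarith [one_le_lg x]
  have h2 : lg x ^ (3:ℕ) ≤ (6 * M ^ ((6:ℝ)⁻¹)) ^ (3:ℕ) := pow_le_pow_left₀ hlg0 h1 3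
  have h3 : (6 * M ^ ((6:ℝ)⁻¹)) ^ (3:ℕ) = 216 * M ^ ((2:ℝ)⁻¹) := by
    rw [mul_pow, ← Real.rpow_natCast (M ^ ((6:ℝ)⁻¹)) 3, ← Real.rpow_mul hM0]
    norm_num
  have h4 : M ^ ((2:ℝ)⁻¹) ≤ Real.exp 1 * x := by
    have hMe : M ≤ Real.exp 1 * x := by
      apply max_le
      · nlinarith
      · nlinarith
    calc M ^ ((2:ℝ)⁻¹) ≤ M ^ (1:ℝ) :=
          Real.rpow_le_rpow_of_exponent_le hM1 (by norm_num)
      _ = M := Real.rpow_one M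
      _ ≤ Real.exp 1 * x := hMe
  nlinarith

lemma sqrt_two_le_phi (n : ℕ) (hn : 1 ≤ n) : Real.sqrt 2 ≤ phi n := by
  apply Real.sqrt_le_sqrt
  have h1 : (1:ℝ) ≤ (n:ℝ) := by exact_mod_cast hn
  have h2 := one_le_llg (n:ℝ)
  nlinarith

lemma phi_sq_le {n : ℕ} {x : ℝ} (h : phi n ≤ x) : 2 * n * llg n ≤ x ^ 2 := by
  have h0 : 0 ≤ 2 * (n:ℝ) * llg n := by
    have := one_le_llg (n:ℝ)
    positivity
  calc 2 * (n:ℝ) * llg n = phi n ^ 2 := (Real.sq_sqrt h0).symm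
    _ ≤ x ^ 2 := pow_le_pow_left₀ (Real.sqrt_nonneg _) h 2

lemma core_bound (a b : ℝ) (ha : a > -1) (hb : b > -1) :
    ∃ K : ℝ, 0 < K ∧ ∀ (x : ℝ) (s : Finset ℕ),
      (∀ n ∈ s, phi (n + 1) ≤ x) →
      ∑ n ∈ s, lg ((n + 1 : ℕ) : ℝ) ^ a * llg ((n + 1 : ℕ) : ℝ) ^ b
        ≤ K * (x ^ 2 * lg x ^ a * llg x ^ (b - 1)) := by
  classical
  refine ⟨216 * Real.exp 1 + 2 ^ (max a 0 + max b 0), by positivity, ?_⟩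
  intro x s hs
  rcases s.eq_empty_or_nonempty with rfl | ⟨n0, hn0⟩
  · simp only [Finset.sum_empty]
    have hR : 0 ≤ x ^ 2 * lg x ^ a * llg x ^ (b - 1) := by
      have h1 : (0:ℝ) ≤ lg x := le_of_lt (lg_pos x)
      have h2 : (0:ℝ) ≤ llg x := le_of_lt (llg_pos x)
      positivity
    have hK : (0:ℝ) ≤ 216 * Real.exp 1 + 2 ^ (max a 0 + max b 0) := by positivity
    exact mul_nonneg hK hR
  have hx1 : 1 ≤ x := by
    have h2 := sqrt_two_le_phi (n0 + 1) (Nat.le_add_left 1 n0)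
    have h3 := hs n0 hn0
    have h1 : (1:ℝ) ≤ Real.sqrt 2 := by
      rw [show (1:ℝ) = Real.sqrt 1 from (Real.sqrt_one).symm]
      exact Real.sqrt_le_sqrt one_le_two
    linarith
  have hx0 : (0:ℝ) ≤ x := by linarith
  set L := lg x with hLdef
  set LL := llg x with hLLdef
  have hL1 : 1 ≤ L := one_le_lg x
  have hLL1 : 1 ≤ LL := one_le_llg x
  have hL0 : (0:ℝ) < L := lg_pos x
  have hLL0 : (0:ℝ) < LL := llg_pos x
  have hLLle : LL ≤ L := llg_le_lg x
  set R := x ^ 2 * L ^ a * LL ^ (b - 1) with hRdef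
  have hR0 : 0 ≤ R := by positivity
  -- split the sum
  set p : ℕ → Prop := fun n => ((n + 1 : ℕ) : ℝ) ≤ x with hp
  rw [← Finset.sum_filter_add_sum_filter_not s p]
  -- small part
  have hsmall : ∑ n ∈ s.filter p, lg ((n + 1 : ℕ) : ℝ) ^ a * llg ((n + 1 : ℕ) : ℝ) ^ b
      ≤ 216 * Real.exp 1 * R := by
    have hterm : ∀ n ∈ s.filter p,
        lg ((n + 1 : ℕ) : ℝ) ^ a * llg ((n + 1 : ℕ) : ℝ) ^ b ≤ L ^ max a 0 * LL ^ max b 0 := by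
      intro n hn
      have hmem := Finset.mem_filter.mp hn
      have hmx : ((n + 1 : ℕ) : ℝ) ≤ x := hmem.2
      have hlgm : lg ((n + 1 : ℕ) : ℝ) ≤ L := lg_mono hmx
      have hllgm : llg ((n + 1 : ℕ) : ℝ) ≤ LL := llg_mono hmx
      have h1 : lg ((n + 1 : ℕ) : ℝ) ^ a ≤ L ^ max a 0 := by
        rcases le_or_gt 0 a with h | h
        · rw [max_eq_left h]
          exact Real.rpow_le_rpow (le_of_lt (lg_pos _)) hlgm h
        · rw [max_eq_right (le_of_lt h), Real.rpow_zero]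
          exact Real.rpow_le_one_of_one_le_of_nonpos (one_le_lg _) (le_of_lt h)
      have h2 : llg ((n + 1 : ℕ) : ℝ) ^ b ≤ LL ^ max b 0 := by
        rcases le_or_gt 0 b with h | h
        · rw [max_eq_left h]
          exact Real.rpow_le_rpow (le_of_lt (llg_pos _)) hllgm h
        · rw [max_eq_right (le_of_lt h), Real.rpow_zero]
          exact Real.rpow_le_one_of_one_le_of_nonpos (one_le_llg _) (le_of_lt h)
      exact mul_le_mul h1 h2 (Real.rpow_nonneg (le_of_lt (llg_pos _)) _)
        (Real.rpow_nonneg (le_of_lt hL0) _)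
    have hcard : ((s.filter p).card : ℝ) ≤ x := by
      have hsub : s.filter p ⊆ Finset.range (Nat.floor x) := by
        intro n hn
        have hmx : ((n + 1 : ℕ) : ℝ) ≤ x := (Finset.mem_filter.mp hn).2
        have : n + 1 ≤ Nat.floor x := Nat.le_floor hmx
        exact Finset.mem_range.mpr this
      calc ((s.filter p).card : ℝ) ≤ ((Finset.range (Nat.floor x)).card : ℝ) := by
            exact_mod_cast Finset.card_le_card hsub
        _ = (Nat.floor x : ℝ) := by rw [Finset.card_range]
        _ ≤ x := Nat.floor_le hx0
    have hB0 : (0:ℝ) ≤ L ^ max a 0 * LL ^ max b 0 := by positivity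
    have hsum1 : ∑ n ∈ s.filter p, lg ((n + 1 : ℕ) : ℝ) ^ a * llg ((n + 1 : ℕ) : ℝ) ^ b
        ≤ x * (L ^ max a 0 * LL ^ max b 0) := by
      calc ∑ n ∈ s.filter p, lg ((n + 1 : ℕ) : ℝ) ^ a * llg ((n + 1 : ℕ) : ℝ) ^ b
          ≤ ((s.filter p).card : ℝ) * (L ^ max a 0 * LL ^ max b 0) := by
            simpa using Finset.sum_le_card_nsmul _ _ _ hterm
        _ ≤ x * (L ^ max a 0 * LL ^ max b 0) := mul_le_mul_of_nonneg_right hcard hB0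
    -- now the analytic bound  x * L^{a⁺} LL^{b⁺} ≤ 216 e R
    have hA : L ^ max a 0 = L ^ a * L ^ (max a 0 - a) := by
      rw [← Real.rpow_add hL0]; ring_nf
    have hB : LL ^ max b 0 = LL ^ (b - 1) * LL ^ (max b 0 - b + 1) := by
      rw [← Real.rpow_add hLL0]; ring_nf
    have e1 : L ^ (max a 0 - a) ≤ L := by
      have hle : max a 0 - a ≤ 1 := by
        rcases le_total a 0 with h | h
        · rw [max_eq_right h]; linarith
        · rw [max_eq_left h]; linarith
      calc L ^ (max a 0 - a) ≤ L ^ (1:ℝ) := Real.rpow_le_rpow_of_exponent_le hL1 hle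
        _ = L := Real.rpow_one L
    have e2 : LL ^ (max b 0 - b + 1) ≤ LL ^ (2:ℝ) := by
      have hle : max b 0 - b + 1 ≤ 2 := by
        rcases le_total b 0 with h | h
        · rw [max_eq_right h]; linarith
        · rw [max_eq_left h]; linarith
      exact Real.rpow_le_rpow_of_exponent_le hLL1 hle
    have e3 : LL ^ (2:ℝ) ≤ L ^ (2:ℝ) := Real.rpow_le_rpow (le_of_lt hLL0) hLLle (by norm_num)
    have e4 : L ^ (max a 0 - a) * LL ^ (max b 0 - b + 1) ≤ L * L ^ (2:ℝ) :=
      mul_le_mul e1 (e2.trans e3) (Real.rpow_nonneg (le_of_lt hLL0) _) (by linarith)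
    have e5 : L * L ^ (2:ℝ) = L ^ (3:ℕ) := by
      rw [show (2:ℝ) = ((2:ℕ):ℝ) by norm_num, Real.rpow_natCast]; ring
    have e6 : L ^ (3:ℕ) ≤ 216 * Real.exp 1 * x := lg_cube_le hx1
    have e7 : L ^ (max a 0 - a) * LL ^ (max b 0 - b + 1) ≤ 216 * Real.exp 1 * x := by
      rw [e5] at e4; linarith
    have hxE : x * (L ^ max a 0 * LL ^ max b 0)
        = (L ^ (max a 0 - a) * LL ^ (max b 0 - b + 1)) * (x * L ^ a * LL ^ (b - 1)) := by
      rw [hA, hB]; ring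
    have hfin : x * (L ^ max a 0 * LL ^ max b 0) ≤ 216 * Real.exp 1 * R := by
      rw [hxE, hRdef]
      have hnn : 0 ≤ x * L ^ a * LL ^ (b - 1) := by positivity
      calc (L ^ (max a 0 - a) * LL ^ (max b 0 - b + 1)) * (x * L ^ a * LL ^ (b - 1))
          ≤ (216 * Real.exp 1 * x) * (x * L ^ a * LL ^ (b - 1)) :=
            mul_le_mul_of_nonneg_right e7 hnn
        _ = 216 * Real.exp 1 * (x ^ 2 * L ^ a * LL ^ (b - 1)) := by ring
    linarith
  -- big part
  have hbig : ∑ n ∈ s.filter (fun n => ¬ p n),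
      lg ((n + 1 : ℕ) : ℝ) ^ a * llg ((n + 1 : ℕ) : ℝ) ^ b
      ≤ 2 ^ (max a 0 + max b 0) * R := by
    set t := s.filter (fun n => ¬ p n) with ht
    have hmemfacts : ∀ n ∈ t, x ≤ ((n + 1 : ℕ) : ℝ) ∧ ((n + 1 : ℕ) : ℝ) ≤ x ^ 2 / (2 * LL)
        ∧ ((n + 1 : ℕ) : ℝ) ≤ x ^ 2 := by
      intro n hn
      have hmem := Finset.mem_filter.mp hn
      have hxm : x ≤ ((n + 1 : ℕ) : ℝ) := le_of_lt (lt_of_not_ge hmem.2)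
      have hphi : phi (n + 1) ≤ x := hs n hmem.1
      have h2m : 2 * ((n + 1 : ℕ) : ℝ) * llg ((n + 1 : ℕ) : ℝ) ≤ x ^ 2 := phi_sq_le hphi
      have hm0 : (0:ℝ) ≤ ((n + 1 : ℕ) : ℝ) := Nat.cast_nonneg _
      have hllgm1 : 1 ≤ llg ((n + 1 : ℕ) : ℝ) := one_le_llg _
      have hLLm : LL ≤ llg ((n + 1 : ℕ) : ℝ) := llg_mono hxm
      constructor
      · exact hxm
      constructor
      · rw [le_div_iff₀ (by positivity : (0:ℝ) < 2 * LL)]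
        nlinarith
      · nlinarith
    have hterm : ∀ n ∈ t, lg ((n + 1 : ℕ) : ℝ) ^ a * llg ((n + 1 : ℕ) : ℝ) ^ b
        ≤ (2 ^ max a 0 * L ^ a) * (2 ^ max b 0 * LL ^ b) := by
      intro n hn
      obtain ⟨hxm, _, hmsq⟩ := hmemfacts n hn
      have hlgup : lg ((n + 1 : ℕ) : ℝ) ≤ 2 * L := le_trans (lg_mono hmsq) (lg_sq_le hx0)
      have hlgdown : L ≤ lg ((n + 1 : ℕ) : ℝ) := lg_mono hxm
      have hllgup : llg ((n + 1 : ℕ) : ℝ) ≤ 2 * LL := le_trans (llg_mono hmsq) (llg_sq_le hx0)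
      have hllgdown : LL ≤ llg ((n + 1 : ℕ) : ℝ) := llg_mono hxm
      have h1 : lg ((n + 1 : ℕ) : ℝ) ^ a ≤ 2 ^ max a 0 * L ^ a := by
        rcases le_or_gt 0 a with h | h
        · rw [max_eq_left h, ← Real.mul_rpow (by norm_num) (le_of_lt hL0)]
          exact Real.rpow_le_rpow (le_of_lt (lg_pos _)) hlgup h
        · rw [max_eq_right (le_of_lt h), Real.rpow_zero, one_mul]
          exact Real.rpow_le_rpow_of_nonpos hL0 hlgdown (le_of_lt h)
      have h2 : llg ((n + 1 : ℕ) : ℝ) ^ b ≤ 2 ^ max b 0 * LL ^ b := by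
        rcases le_or_gt 0 b with h | h
        · rw [max_eq_left h, ← Real.mul_rpow (by norm_num) (le_of_lt hLL0)]
          exact Real.rpow_le_rpow (le_of_lt (llg_pos _)) hllgup h
        · rw [max_eq_right (le_of_lt h), Real.rpow_zero, one_mul]
          exact Real.rpow_le_rpow_of_nonpos hLL0 hllgdown (le_of_lt h)
      exact mul_le_mul h1 h2 (Real.rpow_nonneg (le_of_lt (llg_pos _)) _) (by positivity)
    have hcard : ((t.card : ℝ)) ≤ x ^ 2 / (2 * LL) := by
      have hsub : t ⊆ Finset.range (Nat.floor (x ^ 2 / (2 * LL))) := by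
        intro n hn
        obtain ⟨_, hm, _⟩ := hmemfacts n hn
        exact Finset.mem_range.mpr (Nat.le_floor hm)
      calc ((t.card : ℝ)) ≤ ((Finset.range (Nat.floor (x ^ 2 / (2 * LL)))).card : ℝ) := by
            exact_mod_cast Finset.card_le_card hsub
        _ = (Nat.floor (x ^ 2 / (2 * LL)) : ℝ) := by rw [Finset.card_range]
        _ ≤ x ^ 2 / (2 * LL) := Nat.floor_le (by positivity)
    have hB0 : (0:ℝ) ≤ (2 ^ max a 0 * L ^ a) * (2 ^ max b 0 * LL ^ b) := by positivity
    have hsum1 : ∑ n ∈ t, lg ((n + 1 : ℕ) : ℝ) ^ a * llg ((n + 1 : ℕ) : ℝ) ^ b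
        ≤ (x ^ 2 / (2 * LL)) * ((2 ^ max a 0 * L ^ a) * (2 ^ max b 0 * LL ^ b)) := by
      calc ∑ n ∈ t, lg ((n + 1 : ℕ) : ℝ) ^ a * llg ((n + 1 : ℕ) : ℝ) ^ b
          ≤ ((t.card : ℝ)) * ((2 ^ max a 0 * L ^ a) * (2 ^ max b 0 * LL ^ b)) := by
            simpa using Finset.sum_le_card_nsmul _ _ _ hterm
        _ ≤ (x ^ 2 / (2 * LL)) * ((2 ^ max a 0 * L ^ a) * (2 ^ max b 0 * LL ^ b)) :=
            mul_le_mul_of_nonneg_right hcard hB0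
    have hLLb : LL ^ b = LL ^ (b - 1) * LL := by
      rw [← Real.rpow_add_one (ne_of_gt hLL0) (b - 1)]; ring_nf
    have h2c : (2:ℝ) ^ max a 0 * 2 ^ max b 0 = 2 ^ (max a 0 + max b 0) :=
      (Real.rpow_add two_pos _ _).symm
    have heq : (x ^ 2 / (2 * LL)) * ((2 ^ max a 0 * L ^ a) * (2 ^ max b 0 * LL ^ b))
        = ((2:ℝ) ^ (max a 0 + max b 0) / 2) * R := by
      rw [hLLb, ← h2c, hRdef]
      field_simp
    have h2pos : (0:ℝ) < 2 ^ (max a 0 + max b 0) := Real.rpow_pos_of_pos two_pos _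
    have hfin : ((2:ℝ) ^ (max a 0 + max b 0) / 2) * R ≤ 2 ^ (max a 0 + max b 0) * R := by
      apply mul_le_mul_of_nonneg_right _ hR0
      linarith
    rw [heq] at hsum1
    linarith
  linarith

theorem tail_series_le_moment (a b : ℝ) (ha : a > -1) (hb : b > -1) :
    ∃ K : ℝ, 0 < K ∧ ∀ (Ω : Type) (_ : MeasurableSpace Ω) (μ : Measure Ω),
      IsProbabilityMeasure μ → ∀ X : Ω → ℝ, Measurable X →
      Integrable (fun ω => X ω ^ 2 * (lg |X ω|) ^ a * (llg |X ω|) ^ (b - 1)) μ →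
      (Summable fun n : ℕ =>
          (lg (n + 1 : ℕ)) ^ a * (llg (n + 1 : ℕ)) ^ b *
            (μ {ω | phi (n + 1) ≤ |X ω|}).toReal) ∧
        (∑' n : ℕ, (lg (n + 1 : ℕ)) ^ a * (llg (n + 1 : ℕ)) ^ b *
            (μ {ω | phi (n + 1) ≤ |X ω|}).toReal) ≤
          K * ∫ ω, X ω ^ 2 * (lg |X ω|) ^ a * (llg |X ω|) ^ (b - 1) ∂μ := by
  classical
  obtain ⟨K, hK, hcore⟩ := core_bound a b ha hb
  refine ⟨K, hK, ?_⟩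
  intro Ω mΩ μ hμ X hX hInt
  set g : Ω → ℝ := fun ω => X ω ^ 2 * (lg |X ω|) ^ a * (llg |X ω|) ^ (b - 1) with hgdef
  have hg0 : ∀ ω, 0 ≤ g ω := by
    intro ω
    have h1 : (0:ℝ) ≤ lg |X ω| := le_of_lt (lg_pos _)
    have h2 : (0:ℝ) ≤ llg |X ω| := le_of_lt (llg_pos _)
    have : (0:ℝ) ≤ X ω ^ 2 * (lg |X ω|) ^ a * (llg |X ω|) ^ (b - 1) := by positivity
    simpa [hgdef] using this
  set w : ℕ → ℝ := fun n => (lg ((n + 1 : ℕ) : ℝ)) ^ a * (llg ((n + 1 : ℕ) : ℝ)) ^ b with hwdef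
  have hw0 : ∀ n, 0 ≤ w n := by
    intro n
    have h1 : (0:ℝ) ≤ lg ((n + 1 : ℕ) : ℝ) := le_of_lt (lg_pos _)
    have h2 : (0:ℝ) ≤ llg ((n + 1 : ℕ) : ℝ) := le_of_lt (llg_pos _)
    have : (0:ℝ) ≤ (lg ((n + 1 : ℕ) : ℝ)) ^ a * (llg ((n + 1 : ℕ) : ℝ)) ^ b := by positivity
    simpa [hwdef] using this
  set A : ℕ → Set Ω := fun n => {ω | phi (n + 1) ≤ |X ω|} with hAdef
  have hAmeas : ∀ n, MeasurableSet (A n) := fun n =>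
    measurableSet_le measurable_const hX.abs
  set F : ℕ → ENNReal := fun n => ENNReal.ofReal (w n) * μ (A n) with hFdef
  have key : ∑' n, F n ≤ ENNReal.ofReal (K * ∫ ω, g ω ∂μ) := by
    have h1 : ∀ n, F n = ∫⁻ ω, (A n).indicator (fun _ => ENNReal.ofReal (w n)) ω ∂μ := by
      intro n
      rw [lintegral_indicator (hAmeas n)]
      simp [hFdef, mul_comm]
    calc ∑' n, F n
        = ∫⁻ ω, ∑' n, (A n).indicator (fun _ => ENNReal.ofReal (w n)) ω ∂μ := by
          simp_rw [h1]
          rw [← lintegral_tsum (fun n => (measurable_const.indicator (hAmeas n)).aemeasurable)]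
      _ ≤ ∫⁻ ω, ENNReal.ofReal (K * g ω) ∂μ := by
          apply lintegral_mono
          intro ω
          dsimp only
          rw [ENNReal.tsum_eq_iSup_sum]
          apply iSup_le
          intro t
          have heq : ∑ n ∈ t, (A n).indicator (fun _ => ENNReal.ofReal (w n)) ω
              = ∑ n ∈ t.filter (fun n => ω ∈ A n), ENNReal.ofReal (w n) := by
            rw [Finset.sum_filter]
            apply Finset.sum_congr rfl
            intro n _
            by_cases h : ω ∈ A n <;> simp [Set.indicator, h]
          rw [heq, ← ENNReal.ofReal_sum_of_nonneg (fun n _ => hw0 n)]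
          apply ENNReal.ofReal_le_ofReal
          have happ := hcore |X ω| (t.filter (fun n => ω ∈ A n))
            (fun n hn => (Finset.mem_filter.mp hn).2)
          calc ∑ n ∈ t.filter (fun n => ω ∈ A n), w n
              ≤ K * (|X ω| ^ 2 * lg |X ω| ^ a * llg |X ω| ^ (b - 1)) := happ
            _ = K * g ω := by rw [sq_abs]
      _ = ENNReal.ofReal (K * ∫ ω, g ω ∂μ) := by
          have hKg : Integrable (fun ω => K * g ω) μ := hInt.const_mul K
          rw [← ofReal_integral_eq_lintegral_ofReal hKg
            (Filter.Eventually.of_forall (fun ω => mul_nonneg hK.le (hg0 ω)))]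
          rw [integral_const_mul]
  have hFfin : ∀ n, F n ≠ ⊤ := fun n =>
    ENNReal.mul_ne_top ENNReal.ofReal_ne_top (measure_ne_top μ _)
  have hsumfin : ∑' n, F n ≠ ⊤ := ne_top_of_le_ne_top ENNReal.ofReal_ne_top key
  have htoReal : ∀ n, (F n).toReal = w n * (μ (A n)).toReal := by
    intro n
    rw [hFdef]
    rw [ENNReal.toReal_mul, ENNReal.toReal_ofReal (hw0 n)]
  constructor
  · exact (ENNReal.summable_toReal hsumfin).congr
      (fun n => by rw [htoReal n])
  · calc (∑' n : ℕ, (lg ((n + 1 : ℕ) : ℝ)) ^ a * (llg ((n + 1 : ℕ) : ℝ)) ^ b *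
            (μ {ω | phi (n + 1) ≤ |X ω|}).toReal)
        = (∑' n, F n).toReal := by
          rw [ENNReal.tsum_toReal_eq hFfin]
          apply tsum_congr
          intro n
          rw [htoReal n, hwdef]
      _ ≤ (ENNReal.ofReal (K * ∫ ω, g ω ∂μ)).toReal :=
          ENNReal.toReal_mono ENNReal.ofReal_ne_top key
      _ = K * ∫ ω, g ω ∂μ :=
          ENNReal.toReal_ofReal (mul_nonneg hK.le (integral_nonneg hg0))
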